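/- Let $A \ge 0$ and $Y = Y^\dagger$ be operators on a finite-dimensional complex Hilbert space such that $-A \le Y \le A$ in the Loewner order. Then there exists a Hermitian operator $K$ with operator norm $\|K\|_\infty \le 1$ such that $Y = A^{1/2} K A^{1/2}$. -/

import Mathlib

open scoped ComplexOrder
open Matrix

set_option maxHeartbeats 1000000

/-- The positive semidefinite square root, as `Matrix.PosSemidef.sqrt` was defined in Mathlib
of December 2024 (since removed from Mathlib in favour of `CFC.sqrt`). -/
noncomputable def Matrix.PosSemidef.sqrt {n 𝕜 : Type*} [Fintype n] [RCLike 𝕜] [DecidableEq n]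
    {A : Matrix n n 𝕜} (hA : A.PosSemidef) : Matrix n n 𝕜 :=
  hA.1.eigenvectorUnitary.1 * Matrix.diagonal ((↑) ∘ (√·) ∘ hA.1.eigenvalues) *
  (star hA.1.eigenvectorUnitary : Matrix n n 𝕜)

private lemma psd_isPositive {n : Type*} [Fintype n] [DecidableEq n] (M : Matrix n n ℂ)
    (hM : M.PosSemidef) : (Matrix.toEuclideanCLM (𝕜 := ℂ) M).IsPositive := by
  have := Matrix.isPositive_toEuclideanLin_iff.mpr hM
  rw [← LinearMap.isPositive_toContinuousLinearMap_iff] at this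
  exact this

/-- If `A ≥ 0` and `Y` is Hermitian with `-A ≤ Y ≤ A` in the Loewner order,
then there exists a Hermitian `K` with operator norm `≤ 1` such that `Y = √A * K * √A`. -/
theorem exists_hermitian_contraction_factorization
    {n : Type*} [Fintype n] [DecidableEq n]
    (A Y : Matrix n n ℂ) (hA : A.PosSemidef) (hY : Y.IsHermitian)
    (hYA : (A - Y).PosSemidef) (hAY : (A + Y).PosSemidef) :
    ∃ K : Matrix n n ℂ, K.IsHermitian ∧
      ‖Matrix.toEuclideanCLM (𝕜 := ℂ) K‖ ≤ 1 ∧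
      Y = hA.sqrt * K * hA.sqrt := by
  classical
  have hH := hA.1
  set U : Matrix n n ℂ := (hH.eigenvectorUnitary : Matrix n n ℂ) with hUdef
  set d : n → ℝ := hH.eigenvalues with hddef
  have dnn : ∀ i, 0 ≤ d i := hA.eigenvalues_nonneg
  have hUU : star U * U = 1 := mem_unitaryGroup_iff'.mp hH.eigenvectorUnitary.2
  have hUU' : U * star U = 1 := mem_unitaryGroup_iff.mp hH.eigenvectorUnitary.2
  -- conjugation by U of diagonal matrices
  have hDmul : ∀ f g : n → ℂ, (U * Matrix.diagonal f * star U) * (U * Matrix.diagonal g * star U)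
      = U * Matrix.diagonal (f * g) * star U := by
    intro f g
    calc (U * Matrix.diagonal f * star U) * (U * Matrix.diagonal g * star U)
        = U * Matrix.diagonal f * (star U * U) * Matrix.diagonal g * star U := by
          simp only [Matrix.mul_assoc]
      _ = U * Matrix.diagonal (f * g) * star U := by
          rw [hUU, mul_one, Matrix.mul_assoc U, Matrix.diagonal_mul_diagonal]
          rfl
  have hDstar : ∀ f : n → ℂ, star (U * Matrix.diagonal f * star U)
      = U * Matrix.diagonal (star f) * star U := by
    intro f
    rw [StarMul.star_mul, StarMul.star_mul, star_star]
    rw [Matrix.star_eq_conjTranspose (Matrix.diagonal f), Matrix.diagonal_conjTranspose]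
    simp only [Matrix.mul_assoc]
  set sd : n → ℂ := fun i => (Real.sqrt (d i) : ℂ) with hsd
  set cd : n → ℂ := fun i => (d i : ℂ) with hcd
  have hsqrt_eq : hA.sqrt = U * Matrix.diagonal sd * star U := rfl
  have hA_eq : A = U * Matrix.diagonal cd * star U := hH.spectral_theorem
  set g : n → ℂ := fun i => if d i = 0 then 0 else ((Real.sqrt (d i))⁻¹ : ℂ) with hg
  set p : n → ℂ := fun i => if d i = 0 then 0 else 1 with hp
  -- pointwise identities
  have hsne : ∀ i, d i ≠ 0 → (Real.sqrt (d i) : ℝ) ≠ 0 := fun i h =>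
    Real.sqrt_ne_zero'.mpr (lt_of_le_of_ne (dnn i) (Ne.symm h))
  have hgs : g * sd = p := by
    funext i
    by_cases h : d i = 0
    · simp [hg, hsd, hp, h]
    · have hs := hsne i h
      simp only [Pi.mul_apply, hg, hsd, hp, if_neg h]
      exact inv_mul_cancel₀ (Complex.ofReal_ne_zero.mpr hs)
  have hsg : sd * g = p := by rw [mul_comm, hgs]
  have hgcdg : g * cd * g = p := by
    funext i
    by_cases h : d i = 0
    · simp [hg, hcd, hp, h]
    · have hs := hsne i h
      simp only [Pi.mul_apply, hg, hcd, hp, if_neg h]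
      have hn : (Real.sqrt (d i) : ℂ) ≠ 0 := Complex.ofReal_ne_zero.mpr hs
      have hsq : (Real.sqrt (d i) : ℂ) * (Real.sqrt (d i) : ℂ) = (d i : ℂ) := by
        rw [← Complex.ofReal_mul, Real.mul_self_sqrt (dnn i)]
      rw [← hsq]
      field_simp
  have hcdq : cd * (1 - p) = 0 := by
    funext i
    by_cases h : d i = 0 <;> simp [hcd, hp, h]
  set S : Matrix n n ℂ := U * Matrix.diagonal g * star U with hSdef
  set P : Matrix n n ℂ := U * Matrix.diagonal p * star U with hPdef
  have hgstar : star g = g := by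
    funext i
    by_cases h : d i = 0 <;> simp [hg, h]
  have hpstar : star p = p := by
    funext i
    by_cases h : d i = 0 <;> simp [hp, h]
  have hSstar : star S = S := by rw [hSdef, hDstar, hgstar]
  have hPstar : star P = P := by rw [hPdef, hDstar, hpstar]
  have hSH : Sᴴ = S := by rw [← Matrix.star_eq_conjTranspose]; exact hSstar
  have hPH : Pᴴ = P := by rw [← Matrix.star_eq_conjTranspose]; exact hPstar
  have hS_sqrt : S * hA.sqrt = P := by rw [hsqrt_eq, hSdef, hDmul, hgs]
  have hsqrt_S : hA.sqrt * S = P := by rw [hsqrt_eq, hSdef, hDmul, hsg]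
  have hSAS : S * A * S = P := by
    rw [hA_eq, hSdef, hDmul, hDmul, hgcdg]
  -- kernel lemma
  have hker : ∀ v : n → ℂ, A *ᵥ v = 0 → Y *ᵥ v = 0 := by
    intro v hv
    have h1 : star v ⬝ᵥ (A - Y) *ᵥ v = - (star v ⬝ᵥ Y *ᵥ v) := by
      rw [Matrix.sub_mulVec, dotProduct_sub, hv, dotProduct_zero, zero_sub]
    have h2 : star v ⬝ᵥ (A + Y) *ᵥ v = star v ⬝ᵥ Y *ᵥ v := by
      rw [Matrix.add_mulVec, dotProduct_add, hv, dotProduct_zero, zero_add]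
    have hc1 := hYA.dotProduct_mulVec_nonneg v
    have hc2 := hAY.dotProduct_mulVec_nonneg v
    rw [h1] at hc1
    rw [h2] at hc2
    have hc0 : star v ⬝ᵥ Y *ᵥ v = 0 := le_antisymm (neg_nonneg.mp hc1) hc2
    have h3 : star v ⬝ᵥ (A - Y) *ᵥ v = 0 := by rw [h1, hc0, neg_zero]
    have h4 := (hYA.dotProduct_mulVec_zero_iff v).mp h3
    rw [Matrix.sub_mulVec, hv, zero_sub, neg_eq_zero] at h4
    exact h4
  -- Q := 1 - P kills Y
  have hQ_eq : U * Matrix.diagonal (1 - p) * star U = 1 - P := by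
    have hps : Matrix.diagonal ((1 : n → ℂ) - p) = 1 - Matrix.diagonal p := by
      ext i j
      by_cases h : i = j <;> simp [Matrix.diagonal_apply, Matrix.one_apply, h]
    rw [hps, Matrix.mul_sub, Matrix.sub_mul, Matrix.mul_one, hUU', hPdef]
  have hAQ : A * (U * Matrix.diagonal (1 - p) * star U) = 0 := by
    rw [hA_eq, hDmul, hcdq]
    have hz : Matrix.diagonal (0 : n → ℂ) = 0 := by
      ext i j
      simp [Matrix.diagonal_apply]
    rw [hz, Matrix.mul_zero, Matrix.zero_mul]
  have hYQ : Y * (1 - P) = 0 := by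
    rw [← hQ_eq]
    ext i j
    have h0 : A *ᵥ ((U * Matrix.diagonal (1 - p) * star U) *ᵥ Pi.single j 1) = 0 := by
      rw [Matrix.mulVec_mulVec, hAQ, Matrix.zero_mulVec]
    have h1 := hker _ h0
    rw [Matrix.mulVec_mulVec] at h1
    have h2 := congrFun h1 i
    simpa using h2
  have hYP : Y * P = Y := by
    have := hYQ
    rw [Matrix.mul_sub, Matrix.mul_one, sub_eq_zero] at this
    exact this.symm
  have hPY : P * Y = Y := by
    have h := congrArg Matrix.conjTranspose hYP
    rwa [Matrix.conjTranspose_mul Y P, hPH, hY.eq] at h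
  set K : Matrix n n ℂ := S * Y * S with hKdef
  have hK_herm : K.IsHermitian := by
    show Kᴴ = K
    rw [hKdef, Matrix.conjTranspose_mul (S * Y) S, Matrix.conjTranspose_mul S Y, hSH, hY.eq, Matrix.mul_assoc S Y S]
  -- PSD pieces
  have hPmK : (P - K).PosSemidef := by
    have h := hYA.mul_mul_conjTranspose_same S
    rw [← Matrix.star_eq_conjTranspose, hSstar] at h
    rw [Matrix.mul_sub, Matrix.sub_mul, hSAS] at h
    exact h
  have hPpK : (P + K).PosSemidef := by
    have h := hAY.mul_mul_conjTranspose_same S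
    rw [← Matrix.star_eq_conjTranspose, hSstar] at h
    rw [Matrix.mul_add, Matrix.add_mul, hSAS] at h
    exact h
  have h1mP : ((1 : Matrix n n ℂ) - P).PosSemidef := by
    rw [← hQ_eq]
    have hq : (Matrix.diagonal (1 - p)).PosSemidef := by
      rw [Matrix.posSemidef_diagonal_iff]
      intro i
      by_cases h : d i = 0 <;> simp [hp, h]
    have := hq.mul_mul_conjTranspose_same U
    rwa [← Matrix.star_eq_conjTranspose] at this
  have h1mK : ((1 : Matrix n n ℂ) - K).PosSemidef := by
    have : (1 : Matrix n n ℂ) - K = ((1 : Matrix n n ℂ) - P) + (P - K) := by abel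
    rw [this]
    exact h1mP.add hPmK
  have h1pK : ((1 : Matrix n n ℂ) + K).PosSemidef := by
    have : (1 : Matrix n n ℂ) + K = ((1 : Matrix n n ℂ) - P) + (P + K) := by abel
    rw [this]
    exact h1mP.add hPpK
  -- norm bound
  have hTsa : IsSelfAdjoint (Matrix.toEuclideanCLM (𝕜 := ℂ) K) := by
    rw [_root_.IsSelfAdjoint, ← map_star, Matrix.star_eq_conjTranspose, hK_herm.eq]
  have hT1 : Matrix.toEuclideanCLM (𝕜 := ℂ) K ≤ 1 := by
    rw [ContinuousLinearMap.le_def]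
    have heq : (1 : EuclideanSpace ℂ n →L[ℂ] EuclideanSpace ℂ n)
        - Matrix.toEuclideanCLM (𝕜 := ℂ) K = Matrix.toEuclideanCLM (𝕜 := ℂ) (1 - K) := by
      rw [map_sub, _root_.map_one]
    rw [heq]
    exact psd_isPositive _ h1mK
  have hT2 : -(1 : EuclideanSpace ℂ n →L[ℂ] EuclideanSpace ℂ n)
      ≤ Matrix.toEuclideanCLM (𝕜 := ℂ) K := by
    rw [ContinuousLinearMap.le_def]
    have heq : Matrix.toEuclideanCLM (𝕜 := ℂ) K
        - (-(1 : EuclideanSpace ℂ n →L[ℂ] EuclideanSpace ℂ n))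
        = Matrix.toEuclideanCLM (𝕜 := ℂ) (1 + K) := by
      rw [map_add, _root_.map_one, sub_neg_eq_add, add_comm]
    rw [heq]
    exact psd_isPositive _ h1pK
  have hnorm : ‖Matrix.toEuclideanCLM (𝕜 := ℂ) K‖ ≤ 1 := by
    rcases subsingleton_or_nontrivial (EuclideanSpace ℂ n →L[ℂ] EuclideanSpace ℂ n) with hsub | hnt
    · rw [Subsingleton.elim (Matrix.toEuclideanCLM (𝕜 := ℂ) K)
        (0 : EuclideanSpace ℂ n →L[ℂ] EuclideanSpace ℂ n), norm_zero]
      exact zero_le_one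
    · have hspec1 : ∀ x ∈ spectrum ℝ (Matrix.toEuclideanCLM (𝕜 := ℂ) K), x ≤ 1 := by
        exact (le_algebraMap_iff_spectrum_le (r := (1 : ℝ)) hTsa).mp (by simpa using hT1)
      have hspec2 : ∀ x ∈ spectrum ℝ (Matrix.toEuclideanCLM (𝕜 := ℂ) K), (-1 : ℝ) ≤ x := by
        exact (algebraMap_le_iff_le_spectrum (r := (-1 : ℝ)) hTsa).mp (by simpa using hT2)
      rcases CStarAlgebra.norm_or_neg_norm_mem_spectrum hTsa with hmem | hmem
      · exact hspec1 _ hmem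
      · have := hspec2 _ hmem
        linarith
  refine ⟨K, hK_herm, hnorm, ?_⟩
  calc Y = P * Y * P := by rw [hPY, hYP]
    _ = (hA.sqrt * S) * Y * (S * hA.sqrt) := by rw [hsqrt_S, hS_sqrt]
    _ = hA.sqrt * K * hA.sqrt := by
        rw [hKdef]
        simp only [Matrix.mul_assoc]
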